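/- If α and α' both lie in an open interval of angles that contains no hinge angle of order at most m² (i.e. no angle β admitting a generating triple (p,q,k) with p²+q² ≤ m² lies between α and α'), then ⌊z e^{iα}⌉ = ⌊z e^{iα'}⌉ for all Gaussian integers z with |z| ≤ m. -/

import Mathlib

open Real Complex

/-- x is a half-integer -/
def IsHalf (x : ℝ) : Prop := ∃ n : ℤ, x = (n : ℝ) + 1 / 2

/-- z has a half-integer real or imaginary part (z ∈ ℋ) -/
def InH (z : ℂ) : Prop := IsHalf z.re ∨ IsHalf z.im

/-- rounding to nearest integer -/
noncomputable def rnd (x : ℝ) : ℤ := ⌊x + 1 / 2⌋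

/-- componentwise rounding of a complex number -/
noncomputable def crnd (z : ℂ) : ℂ := ((rnd z.re : ℤ) : ℂ) + ((rnd z.im : ℤ) : ℂ) * Complex.I

/-!
By the intermediate value theorem, a continuous real function on a connected set that never hits
a half-integer has constant rounding. Apply this to both coordinates of the continuous path
`β ↦ z e^{iβ}` on the interval `[α, α']`.
-/

section

variable {X : Type*} [TopologicalSpace X] {s : Set X} {a b : X}

theorem IsPreconnected.floor_eq_of_forall_ne_intCast (hs : IsPreconnected s) {f : X → ℝ}
    (hf : ContinuousOn f s) (hno : ∀ x ∈ s, ∀ n : ℤ, f x ≠ n) (ha : a ∈ s) (hb : b ∈ s) :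
    ⌊f a⌋ = ⌊f b⌋ := by
  wlog hle : ⌊f a⌋ ≤ ⌊f b⌋ generalizing a b
  · exact (this hb ha (le_of_not_ge hle)).symm
  refine hle.antisymm (not_lt.mp fun hlt => ?_)
  have hfa : f a < ⌊f b⌋ := by
    calc f a < ⌊f a⌋ + 1 := Int.lt_floor_add_one _
      _ ≤ ⌊f b⌋ := by exact_mod_cast hlt
  obtain ⟨x, hx, hfx⟩ := hs.intermediate_value ha hb hf ⟨hfa.le, Int.floor_le _⟩
  exact hno x hx _ hfx

theorem IsPreconnected.rnd_eq_of_forall_not_isHalf (hs : IsPreconnected s) {f : X → ℝ}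
    (hf : ContinuousOn f s) (hno : ∀ x ∈ s, ¬ IsHalf (f x)) (ha : a ∈ s) (hb : b ∈ s) :
    rnd (f a) = rnd (f b) := by
  refine hs.floor_eq_of_forall_ne_intCast (f := fun x => f x + 1 / 2)
    (hf.add continuousOn_const) (fun x hx n hn => hno x hx ⟨n - 1, ?_⟩) ha hb
  push_cast
  linarith

theorem IsPreconnected.crnd_eq_of_forall_not_inH (hs : IsPreconnected s) {g : X → ℂ}
    (hg : ContinuousOn g s) (hno : ∀ x ∈ s, ¬ InH (g x)) (ha : a ∈ s) (hb : b ∈ s) :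
    crnd (g a) = crnd (g b) := by
  have hre : rnd (g a).re = rnd (g b).re :=
    hs.rnd_eq_of_forall_not_isHalf (f := fun x => (g x).re) (continuous_re.comp_continuousOn hg)
      (fun x hx h => hno x hx (Or.inl h)) ha hb
  have him : rnd (g a).im = rnd (g b).im :=
    hs.rnd_eq_of_forall_not_isHalf (f := fun x => (g x).im) (continuous_im.comp_continuousOn hg)
      (fun x hx h => hno x hx (Or.inr h)) ha hb
  rw [crnd, crnd, hre, him]

end

/-- if no hinge angle of order at most m² lies between α and α',
the discretized rotations of angles α and α' agree on the ball of radius m. -/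
theorem rho_constant_between_hinge (m : ℕ) (α α' : ℝ) (hle : α ≤ α')
    (h : ∀ β ∈ Set.Icc α α', ∀ p q : ℤ, p ^ 2 + q ^ 2 ≤ (m : ℤ) ^ 2 →
      ¬ InH (((p : ℂ) + (q : ℂ) * Complex.I) * Complex.exp (β * Complex.I))) :
    ∀ p q : ℤ, p ^ 2 + q ^ 2 ≤ (m : ℤ) ^ 2 →
      crnd (((p : ℂ) + (q : ℂ) * Complex.I) * Complex.exp (α * Complex.I)) =
        crnd (((p : ℂ) + (q : ℂ) * Complex.I) * Complex.exp (α' * Complex.I)) := by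
  intro p q hpq
  let rotate (β : ℝ) : ℂ := ((p : ℂ) + (q : ℂ) * Complex.I) * exp (β * I)
  have hrot : Continuous rotate := by fun_prop
  exact isPreconnected_Icc.crnd_eq_of_forall_not_inH (g := rotate) hrot.continuousOn
    (fun β hβ => h β hβ p q hpq) (Set.left_mem_Icc.mpr hle) (Set.right_mem_Icc.mpr hle)
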